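/- Let u, v : (0,∞) → ℂ with u twice differentiable and v differentiable. For r > 0 and z ∈ ℂ∖{0} define the 2×2 matrices A(z,r) = −(i r²/16)σ₃ − (i v(r)/(4z))σ₁ + (i/z²) e^{−i u(r) σ₁/2} σ₃ e^{i u(r) σ₁/2} and B(z,r) = −(i r z/8)σ₃ − (i u'(r)/2)σ₁, where σ₁, σ₂, σ₃ are the Pauli matrices. Then the zero-curvature equation ∂_r A(z,r) − ∂_z B(z,r) + [A(z,r), B(z,r)] = 0 holds for all z ∈ ℂ∖{0} and all r > 0 if and only if v = r u' and u satisfies the radial sine-Gordon equation u'' + u'/r + sin u = 0. -/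

import Mathlib

/-!
In the Pauli basis the zero-curvature expression is
`∂_r A − ∂_z B + [A, B] = −(i (v' + r sin u) / (4z)) σ₁ + (i r (v − r u') / 16) σ₂`:
the `σ₃` components cancel identically. Since `σ₁` and `σ₂` are linearly independent, the
equation holds iff `v = r u'` and `v' = −r sin u`; once `v = r u'` on `(0, ∞)`, the second
condition reads `(r u')' = −r sin u`, which is `r` times the radial sine-Gordon equation.
-/

open Matrix

/-- Pauli matrix `σ₁`. -/
def pauli1 : Matrix (Fin 2) (Fin 2) ℂ := !![0, 1; 1, 0]

/-- Pauli matrix `σ₂`. -/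
def pauli2 : Matrix (Fin 2) (Fin 2) ℂ := !![0, -Complex.I; Complex.I, 0]

/-- Pauli matrix `σ₃`. -/
def pauli3 : Matrix (Fin 2) (Fin 2) ℂ := !![1, 0; 0, -1]

/-- `A(z,r) = −(ir²/16)σ₃ − (iv(r)/(4z))σ₁ + (i/z²) e^{−iu σ₁/2} σ₃ e^{iu σ₁/2}`,
using `e^{−iuσ₁/2} σ₃ e^{iuσ₁/2} = cos(u)σ₃ − sin(u)σ₂`. -/
noncomputable def laxA (u v : ℝ → ℂ) (z : ℂ) (r : ℝ) : Matrix (Fin 2) (Fin 2) ℂ :=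
  (-(Complex.I * (r : ℂ) ^ 2 / 16)) • pauli3 - (Complex.I * v r / (4 * z)) • pauli1 +
    (Complex.I / z ^ 2) • (Complex.cos (u r) • pauli3 - Complex.sin (u r) • pauli2)

/-- `B(z,r) = −(irz/8)σ₃ − (iu'(r)/2)σ₁`. -/
noncomputable def laxB (du : ℝ → ℂ) (z : ℂ) (r : ℝ) : Matrix (Fin 2) (Fin 2) ℂ :=
  (-(Complex.I * (r : ℂ) * z / 8)) • pauli3 - (Complex.I * du r / 2) • pauli1

open Complex

section EntrywiseDeriv

variable {𝕜 : Type*} [NontriviallyNormedField 𝕜] {R : Type*} [NormedRing R] [NormedAlgebra 𝕜 R]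
  {m n : Type*}

/-- Matrices carry no global norm, so derivatives of matrix-valued maps are taken entrywise. -/
def HasEntrywiseDerivAt (F : 𝕜 → Matrix m n R) (F' : Matrix m n R) (x : 𝕜) : Prop :=
  ∀ i j, HasDerivAt (fun s => F s i j) (F' i j) x

namespace HasEntrywiseDerivAt

variable {F G : 𝕜 → Matrix m n R} {F' G' : Matrix m n R} {x : 𝕜}

theorem unique {F'' : Matrix m n R} (hF : HasEntrywiseDerivAt F F' x)
    (hF' : HasEntrywiseDerivAt F F'' x) : F' = F'' :=
  Matrix.ext fun i j => (hF i j).unique (hF' i j)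

theorem add (hF : HasEntrywiseDerivAt F F' x) (hG : HasEntrywiseDerivAt G G' x) :
    HasEntrywiseDerivAt (fun s => F s + G s) (F' + G') x :=
  fun i j => (hF i j).add (hG i j)

theorem sub (hF : HasEntrywiseDerivAt F F' x) (hG : HasEntrywiseDerivAt G G' x) :
    HasEntrywiseDerivAt (fun s => F s - G s) (F' - G') x :=
  fun i j => (hF i j).sub (hG i j)

theorem const_smul (c : R) (hF : HasEntrywiseDerivAt F F' x) :
    HasEntrywiseDerivAt (fun s => c • F s) (c • F') x :=
  fun i j => (hF i j).const_mul c

end HasEntrywiseDerivAt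

theorem HasDerivAt.hasEntrywiseDerivAt_smul_const {f : 𝕜 → R} {f' : R} {x : 𝕜}
    (hf : HasDerivAt f f' x) (M : Matrix m n R) :
    HasEntrywiseDerivAt (fun s => f s • M) (f' • M) x :=
  fun i j => hf.mul_const (M i j)

end EntrywiseDeriv

noncomputable def laxADerivR (u du dv : ℝ → ℂ) (z : ℂ) (r : ℝ) : Matrix (Fin 2) (Fin 2) ℂ :=
  (-(I * r / 8)) • pauli3 - (I * dv r / (4 * z)) • pauli1 +
    (I / z ^ 2) • ((-sin (u r) * du r) • pauli3 - (cos (u r) * du r) • pauli2)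

noncomputable def laxBDerivZ (r : ℝ) : Matrix (Fin 2) (Fin 2) ℂ :=
  (-(I * r / 8)) • pauli3

theorem hasEntrywiseDerivAt_laxA {u v du dv : ℝ → ℂ} (z : ℂ) {r : ℝ}
    (hu : HasDerivAt u (du r) r) (hv : HasDerivAt v (dv r) r) :
    HasEntrywiseDerivAt (laxA u v z) (laxADerivR u du dv z r) r := by
  have hr2 : HasDerivAt (fun s : ℝ => -(I * (s : ℂ) ^ 2 / 16)) (-(I * r / 8)) r := by
    have hs : HasDerivAt (fun s : ℝ => (s : ℂ)) 1 r := (hasDerivAt_id r).ofReal_comp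
    exact (((hs.pow 2).const_mul (-(I / 16))).congr_deriv (by ring)).congr_of_eventuallyEq
      (.of_forall fun s => by simp only [Pi.pow_apply]; ring)
  have hv' : HasDerivAt (fun s => I * v s / (4 * z)) (I * dv r / (4 * z)) r :=
    (hv.const_mul I).div_const _
  have hcos : HasDerivAt (fun s => cos (u s)) (-sin (u r) * du r) r :=
    (hasDerivAt_cos (u r)).comp r hu
  have hsin : HasDerivAt (fun s => sin (u s)) (cos (u r) * du r) r :=
    (hasDerivAt_sin (u r)).comp r hu
  exact ((hr2.hasEntrywiseDerivAt_smul_const pauli3).sub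
      (hv'.hasEntrywiseDerivAt_smul_const pauli1)).add
    (((hcos.hasEntrywiseDerivAt_smul_const pauli3).sub
      (hsin.hasEntrywiseDerivAt_smul_const pauli2)).const_smul _)

theorem hasEntrywiseDerivAt_laxB (du : ℝ → ℂ) (z : ℂ) (r : ℝ) :
    HasEntrywiseDerivAt (fun w => laxB du w r) (laxBDerivZ r) z := by
  have hz : HasDerivAt (fun w : ℂ => -(I * r * w / 8)) (-(I * r / 8)) z :=
    (((hasDerivAt_id z).const_mul (-(I * r / 8))).congr_deriv (by ring)).congr_of_eventuallyEq
      (.of_forall fun w => by simp only [id]; ring)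
  have := (hz.hasEntrywiseDerivAt_smul_const pauli3).sub
    ((hasDerivAt_const z (I * du r / 2)).hasEntrywiseDerivAt_smul_const pauli1)
  rwa [zero_smul, sub_zero] at this

theorem laxZeroCurvature_eq (u v du dv : ℝ → ℂ) {z : ℂ} (hz : z ≠ 0) (r : ℝ) :
    laxADerivR u du dv z r - laxBDerivZ r +
        (laxA u v z r * laxB du z r - laxB du z r * laxA u v z r) =
      (-(I * (dv r + r * sin (u r)) / (4 * z))) • pauli1 +
        (I * r * (v r - r * du r) / 16) • pauli2 := by
  ext i j
  fin_cases i <;> fin_cases j <;>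
    simp [laxADerivR, laxBDerivZ, laxA, laxB, pauli1, pauli2, pauli3] <;>
    field_simp <;> ring_nf <;> simp only [I_sq, I_pow_three] <;> ring

theorem smul_pauli1_add_smul_pauli2_eq_zero_iff (a b : ℂ) :
    a • pauli1 + b • pauli2 = 0 ↔ a = 0 ∧ b = 0 := by
  constructor
  · intro h
    have h01 := congrFun (congrFun h 0) 1
    have h10 := congrFun (congrFun h 1) 0
    simp only [pauli1, pauli2, smul_of, smul_cons, smul_eq_mul, mul_zero, mul_one, smul_empty,
      mul_neg, Fin.isValue, Matrix.add_apply, of_apply, cons_val', cons_val_one, cons_val_fin_one,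
      cons_val_zero, Matrix.zero_apply] at h01 h10
    exact ⟨by linear_combination (h01 + h10) / 2,
      by linear_combination (-I / 2) * (h10 - h01) + b * I_sq⟩
  · rintro ⟨rfl, rfl⟩
    simp

theorem laxZeroCurvature_eq_zero_iff (u v du dv : ℝ → ℂ) {z : ℂ} (hz : z ≠ 0) {r : ℝ}
    (hr : r ≠ 0) :
    laxADerivR u du dv z r - laxBDerivZ r +
        (laxA u v z r * laxB du z r - laxB du z r * laxA u v z r) = 0 ↔
      v r = r * du r ∧ dv r = -(r * sin (u r)) := by
  rw [laxZeroCurvature_eq u v du dv hz r, smul_pauli1_add_smul_pauli2_eq_zero_iff, and_comm]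
  simp [hz, hr, I_ne_zero, sub_eq_zero, add_eq_zero_iff_eq_neg]

theorem exists_laxZeroCurvature_iff {u v du dv : ℝ → ℂ} {z : ℂ} (hz : z ≠ 0) {r : ℝ}
    (hr : r ≠ 0) (hu : HasDerivAt u (du r) r) (hv : HasDerivAt v (dv r) r) :
    (∃ Ar Bz : Matrix (Fin 2) (Fin 2) ℂ,
        (∀ i j : Fin 2, HasDerivAt (fun s : ℝ => laxA u v z s i j) (Ar i j) r) ∧
        (∀ i j : Fin 2, HasDerivAt (fun w : ℂ => laxB du w r i j) (Bz i j) z) ∧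
        Ar - Bz + (laxA u v z r * laxB du z r - laxB du z r * laxA u v z r) = 0) ↔
      v r = r * du r ∧ dv r = -(r * sin (u r)) := by
  rw [← laxZeroCurvature_eq_zero_iff u v du dv hz hr]
  constructor
  · rintro ⟨Ar, Bz, hA, hB, h⟩
    rwa [HasEntrywiseDerivAt.unique hA (hasEntrywiseDerivAt_laxA z hu hv),
      HasEntrywiseDerivAt.unique hB (hasEntrywiseDerivAt_laxB du z r)] at h
  · exact fun h => ⟨_, _, hasEntrywiseDerivAt_laxA z hu hv, hasEntrywiseDerivAt_laxB du z r, h⟩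

theorem HasDerivAt.eq_add_mul_of_eventuallyEq_mul {v f : ℝ → ℂ} {v' f' : ℂ} {r : ℝ}
    (hv : HasDerivAt v v' r) (hf : HasDerivAt f f' r) (h : v =ᶠ[nhds r] fun s => s * f s) :
    v' = f r + r * f' := by
  have hr : HasDerivAt (fun s : ℝ => (s : ℂ)) 1 r := (hasDerivAt_id r).ofReal_comp
  rw [hv.unique ((hr.mul hf).congr_of_eventuallyEq h), one_mul]

/-- The zero-curvature equation `∂_r A − ∂_z B + [A,B] = 0` holds for all `z ≠ 0`,
`r > 0` if and only if `v = r u'` and `u` satisfies the radial sine-Gordon equation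
`u'' + u'/r + sin u = 0`. -/
theorem zero_curvature_iff_sineGordon (u v du dv ddu : ℝ → ℂ)
    (hdu : ∀ r ∈ Set.Ioi (0 : ℝ), HasDerivAt u (du r) r)
    (hddu : ∀ r ∈ Set.Ioi (0 : ℝ), HasDerivAt du (ddu r) r)
    (hdv : ∀ r ∈ Set.Ioi (0 : ℝ), HasDerivAt v (dv r) r) :
    (∀ z : ℂ, z ≠ 0 → ∀ r ∈ Set.Ioi (0 : ℝ),
      ∃ Ar Bz : Matrix (Fin 2) (Fin 2) ℂ,
        (∀ i j : Fin 2, HasDerivAt (fun s : ℝ => laxA u v z s i j) (Ar i j) r) ∧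
        (∀ i j : Fin 2, HasDerivAt (fun w : ℂ => laxB du w r i j) (Bz i j) z) ∧
        Ar - Bz + (laxA u v z r * laxB du z r - laxB du z r * laxA u v z r) = 0) ↔
    (∀ r ∈ Set.Ioi (0 : ℝ),
      v r = (r : ℂ) * du r ∧
      ddu r + du r / (r : ℂ) + Complex.sin (u r) = 0) := by
  have criterion {z : ℂ} (hz : z ≠ 0) {r : ℝ} (hr : r ∈ Set.Ioi 0) :=
    exists_laxZeroCurvature_iff hz hr.ne' (hdu r hr) (hdv r hr)
  have radial (hv : ∀ s ∈ Set.Ioi (0 : ℝ), v s = s * du s) {r : ℝ} (hr : r ∈ Set.Ioi 0) :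
      dv r = -(r * sin (u r)) ↔ ddu r + du r / r + sin (u r) = 0 := by
    have hr0 : (r : ℂ) ≠ 0 := ofReal_ne_zero.mpr hr.ne'
    rw [(hdv r hr).eq_add_mul_of_eventuallyEq_mul (hddu r hr)
      (Filter.eventually_of_mem (Ioi_mem_nhds hr) hv)]
    constructor <;> intro h
    · field_simp; linear_combination h
    · field_simp at h; linear_combination h
  constructor
  · intro h
    have atOne r (hr : r ∈ Set.Ioi 0) := (criterion one_ne_zero hr).1 (h 1 one_ne_zero r hr)
    exact fun r hr => ⟨(atOne r hr).1, (radial (fun s hs => (atOne s hs).1) hr).1 (atOne r hr).2⟩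
  · intro h z hz r hr
    exact (criterion hz hr).2 ⟨(h r hr).1, (radial (fun s hs => (h s hs).1) hr).2 (h r hr).2⟩
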